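/- Fixed-point optimality of federated posterior correction for isotropic Gaussians: suppose vectors m_jnt, m₁,…,m_t ∈ R^d and site vectors λ̂₁,…,λ̂_t ∈ R^d satisfy (i) m_jnt = −Σᵢλ̂ᵢ, (ii) each mᵢ minimizes m ↦ Lᵢ(m) − mᵀλ̂ᵢ + (ρ/2)‖m − m_jnt‖² for differentiable convex Lᵢ and ρ > 0, and (iii) λ̂ᵢ = ∇Lᵢ(mᵢ). Then mᵢ = m_jnt for all i, and m_jnt satisfies the joint stationarity condition Σᵢ∇Lᵢ(m_jnt) + m_jnt = 0, i.e., m_jnt minimizes Σᵢ Lᵢ(m) + (1/2)‖m‖². -/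

import Mathlib

/-! At a fixed point, the first-order condition for client `i`'s local objective reads
`∇Lᵢ(mᵢ) - λ̂ᵢ + ρ (mᵢ - m_jnt) = 0`. Since `λ̂ᵢ = ∇Lᵢ(mᵢ)`, the proximal term vanishes on its
own, so `mᵢ = m_jnt`. Then `∑ᵢ ∇Lᵢ(m_jnt) = ∑ᵢ λ̂ᵢ = -m_jnt` is the stationarity of the convex
joint objective `∑ᵢ Lᵢ + ½‖·‖²`, and the gradient inequality makes it a global minimum. -/

open Set InnerProductSpace

section

variable {F : Type*} [NormedAddCommGroup F] [InnerProductSpace ℝ F] [CompleteSpace F]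
  {f : F → ℝ} {x : F}

theorem IsLocalMin.hasGradientAt_eq_zero {g : F} (h : IsLocalMin f x) (hf : HasGradientAt f g x) :
    g = 0 := by
  simpa using h.hasFDerivAt_eq_zero (hasGradientAt_iff_hasFDerivAt.mp hf)

theorem ConvexOn.add_inner_gradient_le (hf : ConvexOn ℝ univ f) (hx : DifferentiableAt ℝ f x)
    (y : F) : f x + ⟪gradient f x, y - x⟫_ℝ ≤ f y := by
  let φ : ℝ →ᵃ[ℝ] F := AffineMap.lineMap x y
  have hline : HasDerivAt (f ∘ φ) ⟪gradient f x, y - x⟫_ℝ 0 := by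
    have hx' : HasFDerivAt f (toDual ℝ F (gradient f x)) (φ 0) := by
      simpa [φ] using hx.hasGradientAt.hasFDerivAt
    exact hx'.comp_hasDerivAt 0 AffineMap.hasDerivAt_lineMap
  have hslope := (hf.comp_affineMap φ).le_slope_of_hasDerivAt
    (mem_univ 0) (mem_univ 1) zero_lt_one hline
  simp only [slope_def_field, Function.comp_apply, φ, AffineMap.lineMap_apply_zero,
    AffineMap.lineMap_apply_one, sub_zero, div_one] at hslope
  linarith

noncomputable def localObjective (f : F → ℝ) (lam c : F) (ρ : ℝ) (m : F) : ℝ :=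
  f m - ⟪m, lam⟫_ℝ + ρ / 2 * ‖m - c‖ ^ 2

theorem hasGradientAt_localObjective {g : F} (hf : HasGradientAt f g x) (lam c : F) (ρ : ℝ) :
    HasGradientAt (localObjective f lam c ρ) (g - lam + ρ • (x - c)) x := by
  rw [hasGradientAt_iff_hasFDerivAt] at hf ⊢
  have hinner : HasFDerivAt (fun m => ⟪m, lam⟫_ℝ) (toDual ℝ F lam) x := by
    convert (toDual ℝ F lam).hasFDerivAt using 1
    exact funext fun m => real_inner_comm lam m
  have hsq := ((hasFDerivAt_id x).sub_const c).norm_sq.const_mul (ρ / 2)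
  refine ((hf.sub hinner).add hsq).congr_fderiv ?_
  ext v
  simp only [id_eq, map_sub, map_add, map_smul, ContinuousLinearMap.comp_id,
    add_apply, sub_apply, smul_apply, toDual_apply_apply, coe_innerSL_apply, nsmul_eq_mul, Nat.cast_ofNat, smul_eq_mul,
    add_right_inj]
  ring

theorem eq_of_forall_localObjective_le {lam c : F} {ρ : ℝ} (hρ : ρ ≠ 0)
    (hf : DifferentiableAt ℝ f x) (hlam : lam = gradient f x)
    (hmin : ∀ m, localObjective f lam c ρ x ≤ localObjective f lam c ρ m) : x = c := by
  have hzero := IsLocalMin.hasGradientAt_eq_zero (Filter.Eventually.of_forall hmin)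
    (hasGradientAt_localObjective hf.hasGradientAt lam c ρ)
  rw [hlam, sub_self, zero_add, smul_eq_zero, sub_eq_zero] at hzero
  exact hzero.resolve_left hρ

theorem sum_add_half_norm_sq_le_of_sum_gradient_add_eq_zero {ι : Type*} [Fintype ι]
    {L : ι → F → ℝ} (hconv : ∀ i, ConvexOn ℝ univ (L i))
    (hdiff : ∀ i, DifferentiableAt ℝ (L i) x) (hx : ∑ i, gradient (L i) x + x = 0) (y : F) :
    ∑ i, L i x + 1 / 2 * ‖x‖ ^ 2 ≤ ∑ i, L i y + 1 / 2 * ‖y‖ ^ 2 := by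
  have hsum : ∑ i, L i x + ⟪∑ i, gradient (L i) x, y - x⟫_ℝ ≤ ∑ i, L i y := by
    rw [sum_inner, ← Finset.sum_add_distrib]
    exact Finset.sum_le_sum fun i _ => (hconv i).add_inner_gradient_le (hdiff i) y
  rw [eq_neg_of_add_eq_zero_left hx, inner_neg_left, inner_sub_right,
    real_inner_self_eq_norm_sq] at hsum
  have hsq : 0 ≤ ‖y - x‖ ^ 2 := sq_nonneg _
  rw [norm_sub_sq_real, real_inner_comm] at hsq
  linarith

end

/-- Fixed-point optimality of federated posterior correction (isotropic Gaussian case):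
at a fixed point, all local means equal the joint mean, which satisfies the joint
stationarity condition and minimizes the joint objective. -/
theorem federated_posterior_correction_fixed_point (d t : ℕ) (ρ : ℝ) (hρ : 0 < ρ)
    (L : Fin t → EuclideanSpace ℝ (Fin d) → ℝ)
    (hconv : ∀ i, ConvexOn ℝ Set.univ (L i)) (hdiff : ∀ i, Differentiable ℝ (L i))
    (mjnt : EuclideanSpace ℝ (Fin d)) (mi : Fin t → EuclideanSpace ℝ (Fin d))
    (lam : Fin t → EuclideanSpace ℝ (Fin d))
    (h1 : mjnt = -∑ i, lam i)
    (h2 : ∀ i, ∀ m : EuclideanSpace ℝ (Fin d),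
      L i (mi i) - (inner ℝ (mi i) (lam i) : ℝ) + (ρ / 2) * ‖mi i - mjnt‖ ^ 2 ≤
        L i m - (inner ℝ (m) (lam i) : ℝ) + (ρ / 2) * ‖m - mjnt‖ ^ 2)
    (h3 : ∀ i, lam i = gradient (L i) (mi i)) :
    (∀ i, mi i = mjnt) ∧
    ((∑ i, gradient (L i) mjnt) + mjnt = 0) ∧
    (∀ m : EuclideanSpace ℝ (Fin d),
      (∑ i, L i mjnt) + (1 / 2) * ‖mjnt‖ ^ 2 ≤ (∑ i, L i m) + (1 / 2) * ‖m‖ ^ 2) := by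
  have hfix : ∀ i, mi i = mjnt := fun i =>
    eq_of_forall_localObjective_le hρ.ne' (hdiff i _) (h3 i) (h2 i)
  have hstat : ∑ i, gradient (L i) mjnt + mjnt = 0 := by
    have hgrad : ∀ i, gradient (L i) mjnt = lam i := fun i => by rw [h3 i, hfix i]
    rw [Finset.sum_congr rfl fun i _ => hgrad i, h1, add_neg_cancel]
  exact ⟨hfix, hstat,
    sum_add_half_norm_sq_le_of_sum_gradient_add_eq_zero hconv (fun i => hdiff i _) hstat⟩
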